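/- In g_ω, let r = a₂ J∧K₁ + b₂ J∧K₂ + c₂ K₁∧K₂ with real parameters satisfying a₂² + b₂² = c₂². Then r is a solution of the classical Yang–Baxter equation: the Schouten bracket [[r,r]] vanishes in g_ω⊗g_ω⊗g_ω. -/
import Mathlib


open TensorProduct

/-- `x ∧ y = x ⊗ y − y ⊗ x`. -/
noncomputable def wedge {g : Type*} [AddCommGroup g] [Module ℝ g] (x y : g) :
    TensorProduct ℝ g g := x ⊗ₜ[ℝ] y - y ⊗ₜ[ℝ] x

/-- In `g_ω`, the element `r = a₂ J∧K₁ + b₂ J∧K₂ + c₂ K₁∧K₂` with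
`a₂² + b₂² = c₂²` solves the classical Yang–Baxter equation: `[[r,r]] = 0`. -/
theorem CYBE_triangular_g_omega
    (ω : ℝ) (g : Type*) [LieRing g] [LieAlgebra ℝ g]
    (J P0 P1 P2 K1 K2 : g)
    (hind : LinearIndependent ℝ ![J, P0, P1, P2, K1, K2])
    (hspan : Submodule.span ℝ (Set.range ![J, P0, P1, P2, K1, K2]) = ⊤)
    (hJP1 : ⁅J, P1⁆ = P2) (hJP2 : ⁅J, P2⁆ = -P1)
    (hJK1 : ⁅J, K1⁆ = K2) (hJK2 : ⁅J, K2⁆ = -K1) (hJP0 : ⁅J, P0⁆ = 0)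
    (hP1K1 : ⁅P1, K1⁆ = -P0) (hP2K2 : ⁅P2, K2⁆ = -P0)
    (hP1K2 : ⁅P1, K2⁆ = 0) (hP2K1 : ⁅P2, K1⁆ = 0)
    (hP0K1 : ⁅P0, K1⁆ = -P1) (hP0K2 : ⁅P0, K2⁆ = -P2)
    (hK1K2 : ⁅K1, K2⁆ = -J)
    (hP0P1 : ⁅P0, P1⁆ = ω • K1) (hP0P2 : ⁅P0, P2⁆ = ω • K2)
    (hP1P2 : ⁅P1, P2⁆ = -(ω • J))
    -- the Schouten bracket, as a bilinear map determined by its values on pure tensors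
    (S : TensorProduct ℝ g g →ₗ[ℝ] TensorProduct ℝ g g →ₗ[ℝ]
      TensorProduct ℝ g (TensorProduct ℝ g g))
    (hS : ∀ u v u' v' : g,
      S (u ⊗ₜ[ℝ] v) (u' ⊗ₜ[ℝ] v') =
        ⁅u, u'⁆ ⊗ₜ[ℝ] (v ⊗ₜ[ℝ] v') + u ⊗ₜ[ℝ] (⁅v, u'⁆ ⊗ₜ[ℝ] v')
          + u ⊗ₜ[ℝ] (u' ⊗ₜ[ℝ] ⁅v, v'⁆))
    (a2 b2 c2 : ℝ)
    (hconstraint : a2 ^ 2 + b2 ^ 2 = c2 ^ 2)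
    (r : TensorProduct ℝ g g)
    (hr : r = a2 • wedge J K1 + b2 • wedge J K2 + c2 • wedge K1 K2) :
    S r r = 0 := by
  have hK1J : ⁅K1, J⁆ = -K2 := by rw [← lie_skew, hJK1]
  have hK2J : ⁅K2, J⁆ = K1 := by rw [← lie_skew, hJK2, neg_neg]
  have hK2K1 : ⁅K2, K1⁆ = J := by rw [← lie_skew, hK1K2, neg_neg]
  have hJJ : ⁅J, J⁆ = (0 : g) := lie_self J
  have hK1K1 : ⁅K1, K1⁆ = (0 : g) := lie_self K1
  have hK2K2 : ⁅K2, K2⁆ = (0 : g) := lie_self K2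
  subst hr
  simp only [wedge, smul_sub, map_sub, map_add, map_smul, LinearMap.sub_apply,
    LinearMap.add_apply, LinearMap.smul_apply, hS, hJJ, hK1K1, hK2K2,
    hJK1, hJK2, hK1K2, hK1J, hK2J, hK2K1]
  simp only [tmul_neg, neg_tmul, zero_tmul, tmul_zero, smul_neg, smul_add, smul_sub,
    add_zero, zero_add, sub_zero, zero_sub, neg_neg, neg_zero, smul_zero]
  match_scalars <;> linarith [hconstraint]
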